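/- arXiv:2001.03713 — 5 statements merged into one kernel-verified Lean document; each statement's English description precedes it below -/
import Mathlib

section
/- A finite simple graph G has a fractional perfect matching if and only if for every set S of vertices, the number of isolated vertices of G − S is at most |S|. -/
open scoped Classical

/-- A fractional perfect matching of `G`: a weight function on edges with values in
`[0,1]`, vanishing off the edge set, whose weights around each vertex sum to `1`. -/
def HasFPM {V : Type*} [Fintype V] (G : SimpleGraph V) : Prop :=
  ∃ f : Sym2 V → ℝ, (∀ e, 0 ≤ f e ∧ f e ≤ 1) ∧ (∀ e, e ∉ G.edgeSet → f e = 0) ∧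
    ∀ v : V, (∑ e : Sym2 V, if v ∈ e then f e else 0) = 1

private lemma sum_ite_mem_card {V : Type*} [Fintype V] (T : Finset V) (e : Sym2 V) (c : ℝ) :
    (∑ v ∈ T, if v ∈ e then c else 0) = c * ((T.filter (· ∈ e)).card : ℝ) := by
  rw [← Finset.sum_filter, Finset.sum_const, nsmul_eq_mul, mul_comm]

/-- The isolated-vertex condition implies Hall's condition on neighborhoods. -/
private lemma hall_of_isolated {V : Type*} [Fintype V] (G : SimpleGraph V)
    (h : ∀ S : Finset V,
      (Finset.univ.filter fun v : V => v ∉ S ∧ ∀ w, G.Adj v w → w ∈ S).card ≤ S.card) :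
    ∀ X : Finset V, X.card ≤ (X.biUnion (fun v => Finset.univ.filter (G.Adj v))).card := by
  intro X
  by_contra hX
  push_neg at hX
  set N := X.biUnion (fun v => Finset.univ.filter (G.Adj v)) with hN
  set D := X \ N with hD
  set S := D.biUnion (fun v => Finset.univ.filter (G.Adj v)) with hS
  have hDiso : D ⊆ Finset.univ.filter fun v : V => v ∉ S ∧ ∀ w, G.Adj v w → w ∈ S := by
    intro v hv
    obtain ⟨hvX, hvN⟩ := Finset.mem_sdiff.mp hv
    simp only [Finset.mem_filter, Finset.mem_univ, true_and]
    refine ⟨fun hvS => ?_, fun w hw => ?_⟩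
    · obtain ⟨u, hu, hadj⟩ := Finset.mem_biUnion.mp hvS
      exact hvN (Finset.mem_biUnion.mpr ⟨u, (Finset.mem_sdiff.mp hu).1, hadj⟩)
    · exact Finset.mem_biUnion.mpr ⟨v, hv, Finset.mem_filter.mpr ⟨Finset.mem_univ w, hw⟩⟩
  have hSsub : S ⊆ N \ X := by
    intro w hw
    obtain ⟨v, hv, hadj⟩ := Finset.mem_biUnion.mp hw
    obtain ⟨hvX, hvN⟩ := Finset.mem_sdiff.mp hv
    refine Finset.mem_sdiff.mpr ⟨Finset.mem_biUnion.mpr ⟨v, hvX, hadj⟩, fun hwX => ?_⟩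
    refine hvN (Finset.mem_biUnion.mpr ⟨w, hwX, ?_⟩)
    exact Finset.mem_filter.mpr ⟨Finset.mem_univ v, ((Finset.mem_filter.mp hadj).2).symm⟩
  have h1 : D.card + (X ∩ N).card = X.card := Finset.card_sdiff_add_card_inter X N
  have h2 : (N \ X).card + (N ∩ X).card = N.card := Finset.card_sdiff_add_card_inter N X
  have h3 : (X ∩ N).card = (N ∩ X).card := by rw [Finset.inter_comm]
  have h4 : D.card ≤ (Finset.univ.filter fun v : V =>
      v ∉ S ∧ ∀ w, G.Adj v w → w ∈ S).card := Finset.card_le_card hDiso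
  have h5 : S.card ≤ (N \ X).card := Finset.card_le_card hSsub
  have h6 := h S
  omega

/-- A graph has a fractional perfect matching iff for every vertex set `S`, the number of
isolated vertices of `G − S` is at most `|S|`. -/
theorem hasFPM_iff_isolated {V : Type*} [Fintype V] (G : SimpleGraph V) :
    HasFPM G ↔ ∀ S : Finset V,
      (Finset.univ.filter fun v : V => v ∉ S ∧ ∀ w, G.Adj v w → w ∈ S).card ≤ S.card := by
  constructor
  · rintro ⟨f, hf01, hf0, hdeg⟩ S
    set I := Finset.univ.filter fun v : V => v ∉ S ∧ ∀ w, G.Adj v w → w ∈ S with hIdef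
    have key : ∀ e : Sym2 V,
        f e * ((I.filter (· ∈ e)).card : ℝ) ≤ f e * ((S.filter (· ∈ e)).card : ℝ) := by
      intro e
      induction e using Sym2.ind with
      | _ a b =>
        by_cases hfe : f s(a, b) = 0
        · simp [hfe]
        · have hab : G.Adj a b := by
            have : s(a, b) ∈ G.edgeSet := by
              by_contra hc; exact hfe (hf0 _ hc)
            exact this
          apply mul_le_mul_of_nonneg_left _ (hf01 _).1
          by_cases ha : a ∈ I <;> by_cases hb : b ∈ I
          · exfalso
            have hbS : b ∈ S := (Finset.mem_filter.mp ha).2.2 b hab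
            exact (Finset.mem_filter.mp hb).2.1 hbS
          · have hbS : b ∈ S := (Finset.mem_filter.mp ha).2.2 b hab
            have hsub : I.filter (· ∈ (s(a, b) : Sym2 V)) ⊆ {a} := by
              intro v hv
              obtain ⟨hvI, hve⟩ := Finset.mem_filter.mp hv
              rcases Sym2.mem_iff.mp hve with rfl | rfl
              · exact Finset.mem_singleton_self v
              · exact absurd hvI hb
            have h1 : (I.filter (· ∈ (s(a, b) : Sym2 V))).card ≤ 1 := by
              simpa using Finset.card_le_card hsub
            have h2 : 1 ≤ (S.filter (· ∈ (s(a, b) : Sym2 V))).card := by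
              refine Finset.card_pos.mpr ⟨b, Finset.mem_filter.mpr ⟨hbS, ?_⟩⟩
              exact Sym2.mem_mk_right a b
            exact_mod_cast h1.trans h2
          · have haS : a ∈ S := by
              have := (Finset.mem_filter.mp hb).2.2 a hab.symm
              exact this
            have hsub : I.filter (· ∈ (s(a, b) : Sym2 V)) ⊆ {b} := by
              intro v hv
              obtain ⟨hvI, hve⟩ := Finset.mem_filter.mp hv
              rcases Sym2.mem_iff.mp hve with rfl | rfl
              · exact absurd hvI ha
              · exact Finset.mem_singleton_self v
            have h1 : (I.filter (· ∈ (s(a, b) : Sym2 V))).card ≤ 1 := by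
              simpa using Finset.card_le_card hsub
            have h2 : 1 ≤ (S.filter (· ∈ (s(a, b) : Sym2 V))).card := by
              refine Finset.card_pos.mpr ⟨a, Finset.mem_filter.mpr ⟨haS, ?_⟩⟩
              exact Sym2.mem_mk_left a b
            exact_mod_cast h1.trans h2
          · have hempty : I.filter (· ∈ (s(a, b) : Sym2 V)) = ∅ := by
              refine Finset.filter_eq_empty_iff.mpr fun v hv hve => ?_
              rcases Sym2.mem_iff.mp hve with rfl | rfl
              · exact ha hv
              · exact hb hv
            rw [hempty]
            simp
    have hcalc : (I.card : ℝ) ≤ (S.card : ℝ) := by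
      have hIsum : (I.card : ℝ) = ∑ e : Sym2 V, f e * ((I.filter (· ∈ e)).card : ℝ) := by
        calc (I.card : ℝ) = ∑ v ∈ I, (1 : ℝ) := by simp
          _ = ∑ v ∈ I, ∑ e : Sym2 V, (if v ∈ e then f e else 0) := by
              exact Finset.sum_congr rfl fun v _ => (hdeg v).symm
          _ = ∑ e : Sym2 V, ∑ v ∈ I, (if v ∈ e then f e else 0) := Finset.sum_comm
          _ = _ := Finset.sum_congr rfl fun e _ => sum_ite_mem_card I e (f e)
      have hSsum : (S.card : ℝ) = ∑ e : Sym2 V, f e * ((S.filter (· ∈ e)).card : ℝ) := by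
        calc (S.card : ℝ) = ∑ v ∈ S, (1 : ℝ) := by simp
          _ = ∑ v ∈ S, ∑ e : Sym2 V, (if v ∈ e then f e else 0) := by
              exact Finset.sum_congr rfl fun v _ => (hdeg v).symm
          _ = ∑ e : Sym2 V, ∑ v ∈ S, (if v ∈ e then f e else 0) := Finset.sum_comm
          _ = _ := Finset.sum_congr rfl fun e _ => sum_ite_mem_card S e (f e)
      rw [hIsum, hSsum]
      exact Finset.sum_le_sum fun e _ => key e
    exact_mod_cast hcalc
  · intro h
    obtain ⟨g, hginj, hg⟩ :=
      (Finset.all_card_le_biUnion_card_iff_exists_injective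
        (fun v => Finset.univ.filter (G.Adj v))).mp (hall_of_isolated G h)
    have hadj : ∀ v, G.Adj v (g v) := fun v => (Finset.mem_filter.mp (hg v)).2
    have hsurj : Function.Surjective g := Finite.surjective_of_injective hginj
    refine ⟨fun e => ((Finset.univ.filter fun v : V => (s(v, g v) : Sym2 V) = e).card : ℝ) / 2,
      ?_, ?_, ?_⟩
    · intro e
      refine ⟨by positivity, ?_⟩
      induction e using Sym2.ind with
      | _ a b =>
        have hsub : (Finset.univ.filter fun v : V => (s(v, g v) : Sym2 V) = s(a, b)) ⊆ {a, b} := by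
          intro v hv
          have hve := (Finset.mem_filter.mp hv).2
          have : v ∈ (s(a, b) : Sym2 V) := by
            rw [← hve]; exact Sym2.mem_mk_left v (g v)
          rcases Sym2.mem_iff.mp this with rfl | rfl
          · exact Finset.mem_insert_self v {b}
          · exact Finset.mem_insert_of_mem (Finset.mem_singleton_self v)
        have hcard : (Finset.univ.filter fun v : V =>
            (s(v, g v) : Sym2 V) = s(a, b)).card ≤ 2 := by
          refine (Finset.card_le_card hsub).trans ?_
          exact (Finset.card_insert_le a {b}).trans (by simp)
        rw [div_le_one (by norm_num)]
        exact_mod_cast hcard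
    · intro e he
      have hempty : (Finset.univ.filter fun v : V => (s(v, g v) : Sym2 V) = e) = ∅ := by
        refine Finset.filter_eq_empty_iff.mpr fun v _ hve => ?_
        exact he (hve ▸ (G.mem_edgeSet.mpr (hadj v)))
      simp only [hempty, Finset.card_empty, Nat.cast_zero, zero_div]
    · intro v
      obtain ⟨u₀, hu₀⟩ := hsurj v
      have hu₀ne : v ≠ u₀ := by
        intro hvu
        exact (hadj u₀).ne' (hu₀.trans hvu)
      have hterm : ∀ e : Sym2 V,
          (if v ∈ e then
            ((Finset.univ.filter fun u : V => (s(u, g u) : Sym2 V) = e).card : ℝ) / 2 else 0)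
          = ∑ u : V, (if (s(u, g u) : Sym2 V) = e then
              (if v ∈ e then (1 : ℝ) / 2 else 0) else 0) := by
        intro e
        by_cases hv : v ∈ e
        · simp only [hv, if_true]
          rw [Finset.card_filter]
          push_cast
          rw [Finset.sum_div]
          refine Finset.sum_congr rfl fun u _ => ?_
          by_cases hu : (s(u, g u) : Sym2 V) = e <;> simp [hu]
        · simp [hv]
      calc (∑ e : Sym2 V, if v ∈ e then
            ((Finset.univ.filter fun u : V => (s(u, g u) : Sym2 V) = e).card : ℝ) / 2 else 0)
          = ∑ e : Sym2 V, ∑ u : V, (if (s(u, g u) : Sym2 V) = e then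
              (if v ∈ e then (1 : ℝ) / 2 else 0) else 0) :=
            Finset.sum_congr rfl fun e _ => hterm e
        _ = ∑ u : V, ∑ e : Sym2 V, (if (s(u, g u) : Sym2 V) = e then
              (if v ∈ e then (1 : ℝ) / 2 else 0) else 0) := Finset.sum_comm
        _ = ∑ u : V, (if v ∈ (s(u, g u) : Sym2 V) then (1 : ℝ) / 2 else 0) := by
            refine Finset.sum_congr rfl fun u _ => ?_
            rw [Finset.sum_ite_eq]
            simp
        _ = 1 := by
            rw [← Finset.sum_filter]
            have hset : (Finset.univ.filter fun u : V => v ∈ (s(u, g u) : Sym2 V)) = {v, u₀} := by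
              ext u
              simp only [Finset.mem_filter, Finset.mem_univ, true_and, Finset.mem_insert,
                Finset.mem_singleton, Sym2.mem_iff]
              constructor
              · rintro (rfl | hvg)
                · exact Or.inl rfl
                · exact Or.inr (hginj (hu₀.trans hvg)).symm
              · rintro (rfl | rfl)
                · exact Or.inl rfl
                · exact Or.inr hu₀.symm
            rw [hset, Finset.sum_const, Finset.card_pair hu₀ne]
            norm_num
end

section
/- Let G be a graph that is (δ−2)-fault Hamiltonian with minimum degree δ ≥ 3. Then for any set F of at most δ−2 vertices and/or edges, G − F has a fractional perfect matching; consequently fsmp(G) ≥ δ − 1. -/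
open scoped Classical

/-- The graph obtained from `G` by deleting the vertices in `Fv` and the edges in `Fe`. -/
def delFault {V : Type*} (G : SimpleGraph V) (Fv : Finset V) (Fe : Finset (Sym2 V)) :
    SimpleGraph {v : V // v ∈ ({v : V | v ∉ Fv} : Set V)} :=
  (G.deleteEdges ↑Fe).induce {v : V | v ∉ Fv}

/-- The fractional strong matching preclusion number: the minimum total number of vertices
and edges whose deletion leaves a graph with no fractional perfect matching. -/
noncomputable def fsmp {V : Type*} [Fintype V] (G : SimpleGraph V) : ℕ :=
  sInf {n | ∃ (Fv : Finset V) (Fe : Finset (Sym2 V)), ↑Fe ⊆ G.edgeSet ∧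
    Fv.card + Fe.card = n ∧ ¬ HasFPM (delFault G Fv Fe)}
/-- `G` is `f`-fault Hamiltonian: removing any set of at most `f` vertices and/or edges
leaves a Hamiltonian graph. -/
def FaultHam {V : Type*} [Fintype V] (G : SimpleGraph V) (f : ℕ) : Prop :=
  ∀ (Fv : Finset V) (Fe : Finset (Sym2 V)), ↑Fe ⊆ G.edgeSet →
    Fv.card + Fe.card ≤ f → (delFault G Fv Fe).IsHamiltonian

lemma dart_count_sum {W : Type*} [DecidableEq W] (H : SimpleGraph W) [Fintype W] (v : W) (l : List H.Dart) :
    ∑ e : Sym2 W, (if v ∈ e then ((l.map SimpleGraph.Dart.edge).count e : ℝ) else 0)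
      = (l.map (·.fst)).count v + (l.map (·.snd)).count v := by
  induction l with
  | nil => simp
  | cons d l ih =>
    have hne : d.fst ≠ d.snd := d.adj.ne
    simp only [List.map_cons, List.count_cons, beq_iff_eq]
    push_cast
    have h1 : ∀ e : Sym2 W,
        (if v ∈ e then (((l.map SimpleGraph.Dart.edge).count e : ℝ) + if d.edge = e then 1 else 0) else 0)
        = (if v ∈ e then ((l.map SimpleGraph.Dart.edge).count e : ℝ) else 0)
          + (if e = d.edge then (if v ∈ d.edge then (1:ℝ) else 0) else 0) := by
      intro e
      by_cases hv : v ∈ e <;> by_cases he : e = d.edge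
      · subst he; simp [hv]
      · have : d.edge ≠ e := fun hh => he hh.symm
        simp [hv, he, this]
      · subst he; simp [hv]
      · have : d.edge ≠ e := fun hh => he hh.symm
        simp [hv, he, this]
    simp only [h1]
    rw [Finset.sum_add_distrib, ih, Finset.sum_ite_eq' Finset.univ d.edge
      (fun _ => if v ∈ d.edge then (1:ℝ) else 0)]
    have hmem : v ∈ d.edge ↔ v = d.fst ∨ v = d.snd := by
      rw [SimpleGraph.Dart.edge]; exact Sym2.mem_iff
    have hval : (if v ∈ d.edge then (1:ℝ) else 0)
        = (if d.fst = v then (1:ℝ) else 0) + (if d.snd = v then (1:ℝ) else 0) := by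
      by_cases h1 : d.fst = v <;> by_cases h2 : d.snd = v
      · exact absurd (h1.trans h2.symm) hne
      · rw [if_pos (hmem.mpr (Or.inl h1.symm)), if_pos h1, if_neg h2]; ring
      · rw [if_pos (hmem.mpr (Or.inr h2.symm)), if_neg h1, if_pos h2]; ring
      · rw [if_neg, if_neg h1, if_neg h2]
        · ring
        · rw [hmem]; rintro (h|h); exacts [h1 h.symm, h2 h.symm]
    rw [hval, if_pos (Finset.mem_univ d.edge)]; ring

lemma hasFPM_of_isHamiltonian {W : Type*} [DecidableEq W] [Fintype W] (H : SimpleGraph W)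
    (hcard : Fintype.card W ≠ 1) (hham : H.IsHamiltonian) : HasFPM H := by
  obtain ⟨a, p, hp⟩ := hham hcard
  refine ⟨fun e => (p.edges.count e : ℝ) / 2, ?_, ?_, ?_⟩
  · intro e
    refine ⟨by positivity, ?_⟩
    have h1 : p.edges.count e ≤ 1 :=
      List.nodup_iff_count_le_one.mp hp.isCycle.isTrail.edges_nodup e
    have : (p.edges.count e : ℝ) ≤ 1 := by exact_mod_cast h1
    linarith
  · intro e he
    have h0 : e ∉ p.edges := fun h => he (p.edges_subset_edgeSet h)
    show (↑(p.edges.count e) : ℝ) / 2 = 0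
    rw [List.count_eq_zero_of_not_mem h0]
    simp
  · intro v
    have key : ∀ e : Sym2 W, (if v ∈ e then (p.edges.count e : ℝ)/2 else 0)
        = (if v ∈ e then (p.edges.count e : ℝ) else 0)/2 := by
      intro e; split_ifs <;> simp
    simp only [key]
    rw [← Finset.sum_div]
    have hd := dart_count_sum H v p.darts
    rw [show p.darts.map SimpleGraph.Dart.edge = p.edges from rfl] at hd
    rw [hd, SimpleGraph.Walk.map_fst_darts, SimpleGraph.Walk.map_snd_darts]
    have htail : p.support.tail.count v = 1 :=
      ((SimpleGraph.Walk.isHamiltonianCycle_iff_isCycle_and_support_count_tail_eq_one.mp hp).2 v)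
    have hdrop : p.support.dropLast.count v = 1 := by
      have e1 : p.support.dropLast ++ [a] = p.support := by
        conv_rhs => rw [← List.dropLast_append_getLast (p.support_ne_nil)]
        rw [p.getLast_support]
      have e2 : p.support = a :: p.support.tail := p.support_eq_cons
      have c1 : p.support.count v = p.support.dropLast.count v + [a].count v := by
        conv_lhs => rw [← e1]
        rw [List.count_append]
      have c2 : p.support.count v = [a].count v + p.support.tail.count v := by
        conv_lhs => rw [e2]
        rw [show (a :: p.support.tail) = [a] ++ p.support.tail from rfl, List.count_append]
      omega
    rw [htail, hdrop]
    norm_num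

lemma card_delFault_type {V : Type*} [Fintype V] (Fv : Finset V) :
    Fintype.card {v : V // v ∈ ({v : V | v ∉ Fv} : Set V)} = Fintype.card V - Fv.card := by
  rw [Fintype.card_subtype]
  have : Finset.univ.filter (fun v => v ∈ ({v : V | v ∉ Fv} : Set V)) = Fvᶜ := by
    ext x; simp [Finset.mem_compl]
  rw [this, Finset.card_compl]

/-- If `G` is `(δ−2)`-fault Hamiltonian with minimum degree `δ ≥ 3`, then deleting any set
of at most `δ−2` vertices and/or edges leaves a graph with a fractional perfect matching;
consequently `fsmp(G) ≥ δ − 1`. -/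
theorem fpm_of_small_faults {V : Type*} [Fintype V] [Nonempty V] (G : SimpleGraph V)
    (hδ : 3 ≤ G.minDegree) (hham : FaultHam G (G.minDegree - 2)) :
    (∀ (Fv : Finset V) (Fe : Finset (Sym2 V)), ↑Fe ⊆ G.edgeSet →
        Fv.card + Fe.card ≤ G.minDegree - 2 → HasFPM (delFault G Fv Fe)) ∧
      G.minDegree - 1 ≤ fsmp G := by
  have hVcard : G.minDegree < Fintype.card V :=
    lt_of_le_of_lt (G.minDegree_le_degree (Classical.arbitrary V))
      (G.degree_lt_card_verts (Classical.arbitrary V))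
  have part1 : ∀ (Fv : Finset V) (Fe : Finset (Sym2 V)), ↑Fe ⊆ G.edgeSet →
      Fv.card + Fe.card ≤ G.minDegree - 2 → HasFPM (delFault G Fv Fe) := by
    intro Fv Fe hFe hle
    have hc := card_delFault_type (V := V) Fv
    have hcard : Fintype.card {v : V // v ∈ ({v : V | v ∉ Fv} : Set V)} ≠ 1 := by
      rw [hc]; omega
    exact hasFPM_of_isHamiltonian _ hcard (hham Fv Fe hFe hle)
  refine ⟨part1, ?_⟩
  -- the defining set of fsmp is nonempty
  set S := {n | ∃ (Fv : Finset V) (Fe : Finset (Sym2 V)), ↑Fe ⊆ G.edgeSet ∧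
    Fv.card + Fe.card = n ∧ ¬ HasFPM (delFault G Fv Fe)} with hS
  obtain ⟨v₀⟩ := ‹Nonempty V›
  have hne : S.Nonempty := by
    refine ⟨(Finset.univ.erase v₀).card, Finset.univ.erase v₀, ∅, by simp, by simp, ?_⟩
    rintro ⟨f, hb, hoff, hsum⟩
    have hsub : Subsingleton {v : V // v ∈ ({v : V | v ∉ Finset.univ.erase v₀} : Set V)} := by
      constructor
      rintro ⟨x, hx⟩ ⟨y, hy⟩
      simp only [Set.mem_setOf_eq, Finset.mem_erase, Finset.mem_univ, and_true,
        not_not] at hx hy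
      exact Subtype.ext (hx.trans hy.symm)
    have hbot : delFault G (Finset.univ.erase v₀) ∅ = ⊥ := Subsingleton.elim _ _
    have hzero : ∀ e, f e = 0 := fun e => hoff e (by rw [hbot]; simp)
    have hw : v₀ ∈ ({v : V | v ∉ Finset.univ.erase v₀} : Set V) := by
      simp [Finset.mem_erase]
    have := hsum ⟨v₀, hw⟩
    simp only [hzero, if_pos, ite_self, Finset.sum_const_zero] at this
    exact one_ne_zero this.symm
  have hmem := Nat.sInf_mem hne
  rw [show fsmp G = sInf S from rfl]
  by_contra hlt
  push_neg at hlt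
  have hle2 : sInf S ≤ G.minDegree - 2 := by omega
  obtain ⟨Fv, Fe, hFe, hcard, hno⟩ := hmem
  exact hno (part1 Fv Fe hFe (by omega))
end

section
/- Let G be a (δ−2)-fault Hamiltonian graph with minimum degree δ ≥ 3, and let F be a set of vertices and edges of G with |F| = δ−1. Suppose there exists a set S of vertices of G − F such that the number of isolated vertices of G − (F ∪ S) is at least |S| + 1. Then the vertex set of G − (F ∪ S) is an independent set of size (|G| + |F_E| − δ)/2 + 1, where F_E is the set of edges in F. -/
open scoped Classical

/-! Delete one element from `F`, leaving a fault set `F'` with `|F'| = δ - 2`; then `G - F'` has a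
Hamiltonian cycle, which we view as a cyclic permutation `σ` of the vertices outside `F'_V`. Let
`B = (F_V ∪ S) \ F'_V` and `X = F_E \ F'_E`, so that `|B| + |X| = |S| + 1`. A vertex `x` isolated in
`G - (F ∪ S)` has all its neighbours in `G - F'` in `B`, unless the connecting edge lies in `X`.
Since the cycle edges `x σ(x)` are pairwise distinct, `σ` maps all but at most `|X|` isolated
vertices injectively into `B`, so there are at most `|S| + 1` of them. In the case of equality the
isolated vertices and `B` must alternate along the whole cycle, so every vertex outside `F ∪ S` is
isolated, and counting vertices gives the formula. -/

open Finset

namespace SimpleGraph.Walk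

variable {V : Type*} {G : SimpleGraph V} {a : V}

theorem IsCycle.adj_formPerm [DecidableEq V] {p : G.Walk a a} (hp : p.IsCycle) {x : V}
    (hx : x ∈ p.support.tail) : G.Adj x (p.support.tail.formPerm x) := by
  have hlen : p.support.tail.length = p.length := by simp
  have hget : ∀ i (hi : i < p.support.tail.length), p.support.tail[i] = p.getVert (i + 1) :=
    fun i hi => by simp [List.getElem_tail, support_getElem_eq_getVert]
  obtain ⟨i, hi, rfl⟩ := List.getElem_of_mem hx
  have hpos : 0 < p.length := hp.three_le_length.trans_lt' (by norm_num)
  have hwrap : p.getVert (i + 1) = p.getVert ((i + 1) % p.length) := by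
    rcases (show i + 1 < p.length ∨ i + 1 = p.length by omega) with h | h
    · rw [Nat.mod_eq_of_lt h]
    · rw [h, Nat.mod_self, getVert_length, getVert_zero]
  rw [List.formPerm_apply_getElem _ hp.support_nodup, hget, hget, hwrap, hlen]
  exact p.adj_getVert_succ (Nat.mod_lt _ hpos)

end SimpleGraph.Walk

namespace Equiv.Perm.IsCycleOn

variable {α : Type*} {σ : Equiv.Perm α} {s : Set α}

theorem apply_apply_ne [Finite α] (hσ : σ.IsCycleOn s) (hs : 3 ≤ s.ncard) {x : α}
    (hx : x ∈ s) : σ (σ x) ≠ x := by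
  have := Fintype.ofFinite α
  intro h
  have hσ' : σ.IsCycleOn ↑s.toFinset := by rwa [Set.coe_toFinset]
  have hdvd := (hσ'.pow_apply_eq (Set.mem_toFinset.2 hx) (n := 2)).1 (by simpa [sq] using h)
  rw [← Set.ncard_eq_toFinset_card'] at hdvd
  exact absurd (Nat.le_of_dvd two_pos hdvd) (by omega)

variable [DecidableEq α]

theorem card_filter_sym2_mem_le [Fintype α] (hσ : σ.IsCycleOn s) (hs : 3 ≤ s.ncard)
    [DecidablePred (· ∈ s)] (X : Finset (Sym2 α)) :
    #{x | x ∈ s ∧ s(x, σ x) ∈ X} ≤ #X := by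
  refine card_le_card_of_injOn (fun x => s(x, σ x)) (fun x hx => (mem_filter.1 hx).2.2) ?_
  intro x hx y hy hxy
  rcases Sym2.eq_iff.1 hxy with ⟨h, -⟩ | ⟨hxσy, hσxy⟩
  · exact h
  · exact absurd (by rwa [← hxσy]) (hσ.apply_apply_ne hs (mem_filter.1 hy).2.1)

theorem card_eq_and_subset_union [Finite α] (hσ : σ.IsCycleOn s) {A B E : Finset α}
    (hAs : ↑A ⊆ s) (hA : A.Nonempty) (hsucc : ∀ x ∈ A, x ∉ E → σ x ∈ B)
    (hpred : ∀ y, σ y ∈ A → y ∈ B ∨ y ∈ E) (hcard : #B + #E ≤ #A) :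
    #A = #B + #E ∧ s ⊆ ↑A ∪ ↑B := by
  have hmaps : Set.MapsTo σ ↑(A \ E) ↑B := fun x hx =>
    hsucc x (mem_sdiff.1 hx).1 (mem_sdiff.1 hx).2
  have hsdiff : #(A \ E) ≤ #B := card_le_card_of_injOn σ hmaps σ.injective.injOn
  have hA_le : #A ≤ #(A \ E) + #E := card_le_card_sdiff_add_card
  have hEA : E ⊆ A := by
    have := card_sdiff_add_card_inter A E
    exact inter_eq_right.1 (eq_of_subset_of_card_le inter_subset_right (by omega))
  have hB : B = (A \ E).image σ :=
    (eq_of_subset_of_card_le (fun y hy => by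
      obtain ⟨x, hx, rfl⟩ := mem_image.1 hy; exact hmaps hx)
      (by rw [card_image_of_injective _ σ.injective]; omega)).symm
  refine ⟨by omega, fun r hr => ?_⟩
  by_contra hrAB
  -- `σ` is a bijection `A \ E ≃ B` and `σ⁻¹` maps `A` into `B ∪ E ⊆ B ∪ A`, so the rest of `s`
  -- is `σ`-invariant; but the orbit of `r` reaches `A`
  have hclosed : Set.MapsTo σ (s \ (↑A ∪ ↑B)) (s \ (↑A ∪ ↑B)) := by
    rintro x ⟨hxs, hxAB⟩
    refine ⟨hσ.apply_mem_iff.2 hxs, ?_⟩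
    rintro (hσA | hσB)
    · rcases hpred x hσA with hxB | hxE
      · exact hxAB (Or.inr hxB)
      · exact hxAB (Or.inl (hEA hxE))
    · rw [hB, coe_image] at hσB
      obtain ⟨y, hy, hyx⟩ := hσB
      exact hxAB (Or.inl (mem_sdiff.1 (σ.injective hyx ▸ hy)).1)
  obtain ⟨a, ha⟩ := hA
  obtain ⟨n, hn⟩ := hσ.exists_pow_eq' s.toFinite hr (hAs ha)
  have := hclosed.iterate n ⟨hr, hrAB⟩
  rw [← Equiv.Perm.coe_pow, hn] at this
  exact this.2 (Or.inl ha)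

end Equiv.Perm.IsCycleOn

namespace SimpleGraph

variable {V : Type*}

theorem IsHamiltonian.exists_isCycleOn_induce [DecidableEq V] {H : SimpleGraph V} {s : Set V}
    [Fintype s] (hH : (H.induce s).IsHamiltonian) (hs : s.Nontrivial) :
    ∃ σ : Equiv.Perm V, σ.IsCycleOn s ∧ 3 ≤ s.ncard ∧ ∀ x ∈ s, H.Adj x (σ x) := by
  have : Nontrivial s := hs.coe_sort
  obtain ⟨a, p, hp⟩ := hH Fintype.one_lt_card.ne'
  set q := p.map (Embedding.induce s).toHom
  have hq : q.IsCycle := hp.isCycle.map Subtype.val_injective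
  have hmem : ∀ v, v ∈ q.support.tail ↔ v ∈ s := by
    intro v
    simp only [q, Walk.support_map, ← List.map_tail, List.mem_map]
    exact ⟨fun ⟨x, _, hx⟩ => hx ▸ x.2,
      fun hv => ⟨⟨v, hv⟩, p.support_tail_of_not_nil hp.isCycle.not_nil ▸
        hp.isHamiltonian_tail.mem_support _, rfl⟩⟩
  refine ⟨q.support.tail.formPerm, ?_, ?_, fun x hx => hq.adj_formPerm ((hmem x).2 hx)⟩
  · convert hq.support_nodup.isCycleOn_formPerm
    exact (Set.ext hmem).symm
  · rw [← Nat.card_coe_set_eq, Nat.card_eq_fintype_card, ← hp.length_eq]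
    exact hp.isCycle.three_le_length

theorem IsHamiltonian.card_eq_and_subset_union_of_induce [Fintype V] [DecidableEq V]
    {H : SimpleGraph V} {s : Set V} [Fintype s] (hH : (H.induce s).IsHamiltonian)
    (hs : s.Nontrivial) {A B : Finset V} {X : Finset (Sym2 V)} (hAs : ↑A ⊆ s)
    (hA : A.Nonempty) (hnbr : ∀ x ∈ A, ∀ y ∈ s, H.Adj x y → y ∈ B ∨ s(x, y) ∈ X)
    (hcard : #B + #X ≤ #A) : #A = #B + #X ∧ s ⊆ ↑A ∪ ↑B := by
  obtain ⟨σ, hσ, hs3, hadj⟩ := hH.exists_isCycleOn_induce hs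
  set E : Finset V := {x | x ∈ s ∧ s(x, σ x) ∈ X}
  have hEX : #E ≤ #X := hσ.card_filter_sym2_mem_le hs3 X
  have hsucc : ∀ x ∈ A, x ∉ E → σ x ∈ B := fun x hx hxE =>
    (hnbr x hx _ (hσ.apply_mem_iff.2 (hAs hx)) (hadj x (hAs hx))).resolve_right
      fun hX => hxE (mem_filter.2 ⟨mem_univ _, hAs hx, hX⟩)
  have hpred : ∀ y, σ y ∈ A → y ∈ B ∨ y ∈ E := fun y hy => by
    have hys : y ∈ s := hσ.apply_mem_iff.1 (hAs hy)
    refine (hnbr _ hy y hys (hadj y hys).symm).imp_right fun hX => ?_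
    exact mem_filter.2 ⟨mem_univ _, hys, Sym2.eq_swap ▸ hX⟩
  obtain ⟨hAE, hcover⟩ := hσ.card_eq_and_subset_union hAs hA hsucc hpred (by omega)
  exact ⟨by omega, hcover⟩

theorem exists_adj_notMem_of_card_lt_minDegree [Fintype V] (G : SimpleGraph V)
    [DecidableRel G.Adj] (u : V) {T : Finset V} (hT : #T < G.minDegree) :
    ∃ w, G.Adj u w ∧ w ∉ T := by
  have hlt : #T < #(G.neighborFinset u) :=
    hT.trans_le (G.card_neighborFinset_eq_degree u ▸ G.minDegree_le_degree u)
  obtain ⟨w, hw, hwT⟩ := exists_mem_notMem_of_card_lt_card hlt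
  exact ⟨w, (G.mem_neighborFinset u w).1 hw, hwT⟩

theorem mem_sdiff_or_mem_sdiff_of_deleteEdges_adj [DecidableEq V] {G : SimpleGraph V}
    {T T' : Finset V} {Fe Fe' : Finset (Sym2 V)} {x y : V}
    (hx : ∀ w, (G.deleteEdges ↑Fe).Adj x w → w ∈ T) (hy : y ∉ T')
    (hxy : (G.deleteEdges ↑Fe').Adj x y) : y ∈ T \ T' ∨ s(x, y) ∈ Fe \ Fe' := by
  rw [deleteEdges_adj] at hxy
  by_cases hxyFe : s(x, y) ∈ Fe
  · exact Or.inr (mem_sdiff.2 ⟨hxyFe, hxy.2⟩)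
  · exact Or.inl (mem_sdiff.2 ⟨hx y (deleteEdges_adj.2 ⟨hxy.1, hxyFe⟩), hy⟩)

end SimpleGraph

theorem Finset.exists_subset_subset_card_add_card_add_one {α β : Type*} [DecidableEq α]
    [DecidableEq β] (s : Finset α) (t : Finset β) (h : #s + #t ≠ 0) :
    ∃ s' ⊆ s, ∃ t' ⊆ t, #s' + #t' + 1 = #s + #t := by
  rcases s.eq_empty_or_nonempty with rfl | ⟨a, ha⟩
  · obtain ⟨b, hb⟩ := card_ne_zero.1 (by simpa using h)
    exact ⟨∅, subset_refl _, t.erase b, erase_subset b t, by simp [card_erase_add_one hb]⟩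
  · exact ⟨s.erase a, erase_subset a s, t, subset_refl t,
      by rw [add_right_comm, card_erase_add_one ha]⟩

theorem indep_of_many_isolated_general {V : Type*} [Fintype V] (G : SimpleGraph V)
    (hδ : 3 ≤ G.minDegree) (hham : FaultHam G (G.minDegree - 2))
    (Fv : Finset V) (Fe : Finset (Sym2 V)) (hFe : ↑Fe ⊆ G.edgeSet)
    (hF : Fv.card + Fe.card = G.minDegree - 1)
    (S : Finset V) (hSF : Disjoint S Fv)
    (hiso : S.card + 1 ≤
      (Finset.univ.filter fun v : V => v ∉ Fv ∪ S ∧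
        ∀ w, (G.deleteEdges ↑Fe).Adj v w → w ∈ Fv ∪ S).card) :
    (∀ a b : V, a ∉ Fv ∪ S → b ∉ Fv ∪ S → ¬ (G.deleteEdges ↑Fe).Adj a b) ∧
      2 * ((Fintype.card V : ℤ) - Fv.card - S.card) =
        (Fintype.card V : ℤ) + Fe.card - G.minDegree + 2 := by
  set I := Finset.univ.filter fun v : V => v ∉ Fv ∪ S ∧
    ∀ w, (G.deleteEdges ↑Fe).Adj v w → w ∈ Fv ∪ S
  obtain ⟨u, hu⟩ : I.Nonempty := card_pos.1 (by omega)
  obtain ⟨Fv', hFv', Fe', hFe', hdrop⟩ :=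
    exists_subset_subset_card_add_card_add_one Fv Fe (by omega)
  have hH : ((G.deleteEdges ↑Fe').induce {v | v ∉ Fv'}).IsHamiltonian :=
    hham Fv' Fe' ((coe_subset.2 hFe').trans hFe) (by omega)
  have hIs : ↑I ⊆ {v | v ∉ Fv'} := fun v hv hvF =>
    (mem_filter.1 hv).2.1 (mem_union_left _ (hFv' hvF))
  obtain ⟨w, huw, hw⟩ := G.exists_adj_notMem_of_card_lt_minDegree u (T := Fv') (by omega)
  have hBX : #((Fv ∪ S) \ Fv') + #(Fe \ Fe') = #S + 1 := by
    rw [card_sdiff_of_subset (hFv'.trans subset_union_left), card_sdiff_of_subset hFe',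
      card_union_of_disjoint hSF.symm]
    have := card_le_card hFv'
    have := card_le_card hFe'
    omega
  obtain ⟨hIcard, hcover⟩ := hH.card_eq_and_subset_union_of_induce ⟨u, hIs hu, w, hw, huw.ne⟩
    hIs ⟨u, hu⟩ (fun x hx y hy =>
      SimpleGraph.mem_sdiff_or_mem_sdiff_of_deleteEdges_adj (mem_filter.1 hx).2.2 hy) (by omega)
  have hIc : I = (Fv ∪ S)ᶜ := by
    refine ext fun v => ⟨fun hv => mem_compl.2 (mem_filter.1 hv).2.1, fun hv => ?_⟩
    have hvF' : v ∉ Fv' := fun h => mem_compl.1 hv (mem_union_left _ (hFv' h))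
    exact (hcover hvF').resolve_right fun h => mem_compl.1 hv (mem_sdiff.1 h).1
  refine ⟨fun a b ha hb hab => hb ((mem_filter.1 (hIc ▸ mem_compl.2 ha)).2.2 b hab), ?_⟩
  have hcount := card_compl (Fv ∪ S)
  rw [← hIc, card_union_of_disjoint hSF.symm] at hcount
  omega

/-- Let `G` be a `(δ−2)`-fault Hamiltonian graph with minimum degree `δ ≥ 3`, and let
`F = Fv ∪ Fe` be a set of vertices and edges with `|F| = δ−1`.  If there is a vertex set
`S` of `G − F` such that `G − (F ∪ S)` has at least `|S| + 1` isolated vertices, then the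
vertex set of `G − (F ∪ S)` is independent and has exactly `(|G| + |F_E| − δ)/2 + 1`
elements. -/
theorem indep_of_many_isolated {V : Type*} [Fintype V] [Nonempty V] (G : SimpleGraph V)
    (hδ : 3 ≤ G.minDegree) (hham : FaultHam G (G.minDegree - 2))
    (Fv : Finset V) (Fe : Finset (Sym2 V)) (hFe : ↑Fe ⊆ G.edgeSet)
    (hF : Fv.card + Fe.card = G.minDegree - 1)
    (S : Finset V) (hSF : Disjoint S Fv)
    (hiso : S.card + 1 ≤
      (Finset.univ.filter fun v : V => v ∉ Fv ∪ S ∧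
        ∀ w, (G.deleteEdges ↑Fe).Adj v w → w ∈ Fv ∪ S).card) :
    (∀ a b : V, a ∉ Fv ∪ S → b ∉ Fv ∪ S → ¬ (G.deleteEdges ↑Fe).Adj a b) ∧
      2 * ((Fintype.card V : ℤ) - Fv.card - S.card) =
        (Fintype.card V : ℤ) + Fe.card - G.minDegree + 2 :=
  indep_of_many_isolated_general G hδ hham Fv Fe hFe hF S hSF hiso
end

section
/- Let G be a (δ−2)-fault Hamiltonian graph with minimum degree δ ≥ 3 such that α(G) ≤ ⌈(|G|+1)/2⌉ − δ. Then for every set F of vertices and/or edges of G with |F| = δ−1, the graph G − F has a fractional perfect matching; consequently fsmp(G) = fmp(G) = δ. -/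
open scoped Classical

/-- The independence number of a graph. -/
noncomputable def indepNum {V : Type*} (G : SimpleGraph V) : ℕ :=
  sSup {n | ∃ s : Finset V, s.card = n ∧ ∀ a ∈ s, ∀ b ∈ s, ¬ G.Adj a b}

/-- The fractional matching preclusion number. -/
noncomputable def fmp {V : Type*} [Fintype V] (G : SimpleGraph V) : ℕ :=
  sInf {n | ∃ Fe : Finset (Sym2 V), ↑Fe ⊆ G.edgeSet ∧ Fe.card = n ∧
    ¬ HasFPM (G.deleteEdges ↑Fe)}

/-!
Restoring one fault of a fault set `F` with `|F| = δ - 1` leaves at most `δ - 2` faults, so the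
graph becomes Hamiltonian; cutting its Hamiltonian cycle at the restored vertex or edge gives a
Hamiltonian path `q₀ q₁ ⋯ q_{M-1}` of `G - F`. If `M` is even, every other path edge gives a
perfect matching. If `M` is odd, the bound on `α(G)` makes the `(M + 1) / 2` even-indexed vertices
outnumber `α(G)` plus the number of edges in `F`, so two of them, `q_a` and `q_b`, are adjacent in
`G - F`; weight `1/2` on the odd cycle `q_a ⋯ q_b q_a` and weight `1` on alternate edges of the rest
of the path is a fractional perfect matching. Deleting the `δ` edges at a vertex of minimum degree
isolates it, whence `fsmp(G) = fmp(G) = δ`.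
-/

open Set Function

section FPM

variable {W : Type*} [Fintype W]

lemma HasFPM.mono {H H' : SimpleGraph W} (hle : H ≤ H') (h : HasFPM H) : HasFPM H' := by
  obtain ⟨f, hbd, hoff, hsum⟩ := h
  exact ⟨f, hbd, fun e he => hoff e fun h => he (SimpleGraph.edgeSet_mono hle h), hsum⟩

lemma not_hasFPM_of_isolated {H : SimpleGraph W} {v : W} (hv : ∀ w, ¬ H.Adj v w) :
    ¬ HasFPM H := by
  rintro ⟨f, -, hoff, hsum⟩
  have hzero : ∀ e : Sym2 W, (if v ∈ e then f e else 0) = 0 := by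
    intro e
    split_ifs with hve
    · obtain ⟨w, rfl⟩ := Sym2.mem_iff_exists.mp hve
      exact hoff _ (hv w)
    · rfl
  simpa [hzero] using hsum v

lemma HasFPM.of_iso {W' : Type*} [Fintype W'] {H : SimpleGraph W} {H' : SimpleGraph W'}
    (φ : H ≃g H') (h : HasFPM H) : HasFPM H' := by
  obtain ⟨f, hbd, hoff, hsum⟩ := h
  refine ⟨fun e => f (e.map φ.symm), fun e => hbd _, fun e he => hoff _ ?_, fun v => ?_⟩
  · rwa [φ.symm.map_mem_edgeSet_iff]
  · rw [← hsum (φ.symm v)]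
    refine Fintype.sum_bijective (Sym2.map φ.symm) (bijective_iff_has_inverse.mpr
      ⟨Sym2.map φ, fun e => by simp [Sym2.map_map],
        fun e => by simp [Sym2.map_map]⟩) _ _ fun e => ?_
    simp only [Sym2.mem_map, EmbeddingLike.apply_eq_iff_eq, exists_eq_right]

/-- Weight `1/2` on each edge `s(u, π u)`, counted with multiplicity: every vertex lies on exactly
two of these edges. -/
lemma HasFPM.of_perm {H : SimpleGraph W} (π : Equiv.Perm W) (hπ : ∀ w, H.Adj w (π w)) :
    HasFPM H := by
  set f : Sym2 W → ℝ := fun e => ∑ u, if s(u, π u) = e then (1 / 2 : ℝ) else 0 with hf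
  have hnonneg : ∀ e, 0 ≤ f e := fun e =>
    Finset.sum_nonneg fun u _ => by split_ifs <;> norm_num
  have hsum : ∀ v, (∑ e, if v ∈ e then f e else 0) = 1 := by
    intro v
    calc (∑ e, if v ∈ e then f e else 0)
        = ∑ e, ∑ u, if s(u, π u) = e then (if v ∈ e then (1 / 2 : ℝ) else 0) else 0 := by
          refine Finset.sum_congr rfl fun e _ => ?_
          by_cases hve : v ∈ e <;> simp [hf, hve]
      _ = (∑ u, if v ∈ s(u, π u) then (1 : ℝ) else 0) / 2 := by
          rw [Finset.sum_comm, Finset.sum_div]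
          simp only [Finset.sum_ite_eq, Finset.mem_univ, if_true]
          refine Finset.sum_congr rfl fun u _ => ?_
          split_ifs <;> norm_num
      _ = (∑ u, ((if u = v then (1 : ℝ) else 0) + if π u = v then 1 else 0)) / 2 := by
          congr 1
          refine Finset.sum_congr rfl fun u _ => ?_
          have hne : π u ≠ u := (hπ u).ne'
          by_cases huv : u = v
          · subst huv; simp [hne]
          · simp [Sym2.mem_iff, huv, Ne.symm huv, eq_comm (a := v)]
      _ = 1 := by
          rw [Finset.sum_add_distrib, Equiv.sum_comp π (fun w => if w = v then (1 : ℝ) else 0)]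
          simp only [Finset.sum_ite_eq', Finset.mem_univ, if_true]
          norm_num
  refine ⟨f, fun e => ⟨hnonneg e, ?_⟩, fun e he => ?_, hsum⟩
  · induction e using Sym2.ind with
    | _ x y =>
      calc f s(x, y) = if x ∈ s(x, y) then f s(x, y) else 0 := by simp
        _ ≤ ∑ e, if x ∈ e then f e else 0 :=
          Finset.single_le_sum (f := fun e => if x ∈ e then f e else 0)
            (fun e _ => by split_ifs <;> simp [hnonneg]) (Finset.mem_univ _)
        _ = 1 := hsum x
  · have hoff : ∀ u, s(u, π u) ≠ e := fun u hu => he (hu ▸ hπ u)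
    simp [hf, hoff]

end FPM

/-- `σ` swaps the two ends of alternate path edges, except that in the odd case it runs around
the odd cycle `a → a + 1 → ⋯ → b → a`. -/
lemma exists_injOn_of_path {M : ℕ} {R : ℕ → ℕ → Prop} (hR : ∀ i j, R i j → R j i)
    (hpath : ∀ i, i + 1 < M → R i (i + 1))
    (hchord : Even M ∨ ∃ a b, a < b ∧ b < M ∧ Even a ∧ Even b ∧ R a b) :
    ∃ σ : ℕ → ℕ, MapsTo σ (Iio M) (Iio M) ∧ InjOn σ (Iio M) ∧ ∀ i < M, R i (σ i) := by
  have hstep : ∀ i j, i < M → j < M → j = i + 1 ∨ i = j + 1 → R i j := by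
    rintro i j hi hj (rfl | rfl)
    exacts [hpath i hj, hR _ _ (hpath j (by omega))]
  by_cases hM : Even M
  · rw [Nat.even_iff] at hM
    refine ⟨fun i => if i % 2 = 0 then i + 1 else i - 1, fun i hi => ?_, fun i hi j hj hij => ?_,
      fun i hi => hstep _ _ hi ?_ ?_⟩
    · simp only [mem_Iio] at *; split_ifs <;> omega
    · simp only [mem_Iio] at *; split_ifs at hij <;> omega
    all_goals dsimp only; split_ifs <;> omega
  obtain ⟨a, b, hab, hbM, ha, hb, hRab⟩ := hchord.resolve_left hM
  rw [Nat.not_even_iff] at hM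
  rw [Nat.even_iff] at ha hb
  refine ⟨fun i => if i < a then (if i % 2 = 0 then i + 1 else i - 1)
    else if i < b then i + 1 else if i = b then a else if i % 2 = 1 then i + 1 else i - 1,
    fun i hi => ?_, fun i hi j hj hij => ?_, fun i hi => ?_⟩
  · simp only [mem_Iio] at *; split_ifs <;> omega
  · simp only [mem_Iio] at *; split_ifs at hij <;> omega
  · by_cases hib : i = b
    · subst hib; simpa [Nat.lt_asymm hab] using hR _ _ hRab
    · exact hstep _ _ hi (by dsimp only; split_ifs <;> omega) (by dsimp only; split_ifs <;> omega)

lemma hasFPM_induce_of_path {V : Type*} (H : SimpleGraph V) {S : Set V} [Fintype S] {M : ℕ}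
    {q : ℕ → V} (hq : BijOn q (Iio M) S) (hpath : ∀ i, i + 1 < M → H.Adj (q i) (q (i + 1)))
    (hchord : Even M ∨ ∃ a b, a < b ∧ b < M ∧ Even a ∧ Even b ∧ H.Adj (q a) (q b)) :
    HasFPM (H.induce S) := by
  obtain ⟨σ, hmaps, hinj, hadj⟩ :=
    exists_injOn_of_path (R := fun i j => H.Adj (q i) (q j)) (fun _ _ h => h.symm) hpath hchord
  let e : Iio M ≃ S := hq.equiv
  have hτ : Bijective (hmaps.restrict σ _ _) :=
    Finite.injective_iff_bijective.mp (hmaps.restrict_inj.mpr hinj)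
  refine HasFPM.of_perm (e.symm.trans ((Equiv.ofBijective _ hτ).trans e)) fun w => ?_
  obtain ⟨i, rfl⟩ := e.surjective w
  simp only [Equiv.trans_apply, Equiv.symm_apply_apply, Equiv.ofBijective_apply]
  exact hadj i i.2

section Independence

variable {V : Type*} [Fintype V] {G : SimpleGraph V}

lemma card_le_indepNum {s : Finset V} (hs : G.IsIndepSet s) : s.card ≤ indepNum G := by
  refine le_csSup ⟨Fintype.card V, ?_⟩ ⟨s, rfl, fun a ha b hb hab => hs ha hb hab.ne hab⟩
  rintro _ ⟨t, rfl, -⟩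
  exact t.card_le_univ

lemma one_le_indepNum [Nonempty V] : 1 ≤ indepNum G := by
  simpa using card_le_indepNum (G := G) (s := {Classical.arbitrary V}) (by simp)

lemma card_le_indepNum_add_card {Fe : Finset (Sym2 V)} {s : Finset V}
    (hs : (G.deleteEdges Fe).IsIndepSet s) : s.card ≤ indepNum G + Fe.card := by
  set T := Fe.image fun e => e.out.1
  have hindep : G.IsIndepSet ↑(s \ T) := by
    intro a ha b hb hne hadj
    simp only [Finset.coe_sdiff, Set.mem_sdiff, Finset.mem_coe] at ha hb
    by_cases he : s(a, b) ∈ Fe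
    · rcases Sym2.mem_iff.mp (Sym2.out_fst_mem s(a, b)) with h | h
      · exact ha.2 (Finset.mem_image.mpr ⟨_, he, h⟩)
      · exact hb.2 (Finset.mem_image.mpr ⟨_, he, h⟩)
    · exact hs ha.1 hb.1 hne (SimpleGraph.deleteEdges_adj.mpr ⟨hadj, he⟩)
  calc s.card ≤ (s \ T).card + T.card := Finset.card_le_card_sdiff_add_card
    _ ≤ indepNum G + Fe.card := add_le_add (card_le_indepNum hindep) Finset.card_image_le

lemma exists_even_chord {Fe : Finset (Sym2 V)} {M : ℕ} {q : ℕ → V} (hq : InjOn q (Iio M))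
    (hM : indepNum G + Fe.card < (M + 1) / 2) :
    ∃ a b, a < b ∧ b < M ∧ Even a ∧ Even b ∧ (G.deleteEdges Fe).Adj (q a) (q b) := by
  by_contra! hno
  set s := (Finset.range ((M + 1) / 2)).image fun i => q (2 * i)
  have hcard : s.card = (M + 1) / 2 := by
    rw [Finset.card_image_of_injOn, Finset.card_range]
    intro i hi j hj hij
    simp only [Finset.coe_range, mem_Iio] at hi hj
    have := hq (show 2 * i < M by omega) (show 2 * j < M by omega) hij
    omega
  have hindep : (G.deleteEdges Fe).IsIndepSet s := by
    simp only [s, Finset.coe_image, Finset.coe_range]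
    rintro _ ⟨i, hi, rfl⟩ _ ⟨j, hj, rfl⟩ hne hadj
    simp only [mem_Iio] at hi hj
    rcases lt_or_gt_of_ne (fun h : i = j => hne (h ▸ rfl)) with h | h
    · exact hno _ _ (by omega) (by omega) (even_two_mul i) (even_two_mul j) hadj
    · exact hno _ _ (by omega) (by omega) (even_two_mul j) (even_two_mul i) hadj.symm
  have := card_le_indepNum_add_card hindep
  omega

end Independence

section Cycles

variable {V : Type*}

lemma exists_cycle_of_isHamiltonian_induce {H : SimpleGraph V} {S : Set V} [Fintype S]
    (hS : Nat.card S ≠ 1) (hH : (H.induce S).IsHamiltonian) :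
    ∃ c : ℕ → V, Periodic c (Nat.card S) ∧ BijOn c (Iio (Nat.card S)) S ∧
      ∀ i, H.Adj (c i) (c (i + 1)) := by
  obtain ⟨a, p, hp⟩ := hH (by rwa [Fintype.card_eq_nat_card])
  set L := Nat.card S
  have hlen : p.length = L := by rw [hp.length_eq, Fintype.card_eq_nat_card]
  have hL : 0 < L := by have := hp.isCycle.three_le_length; omega
  have hmod : ∀ n ≤ L, p.getVert (n % L) = p.getVert n := by
    intro n hn
    rcases hn.lt_or_eq with hn | rfl
    · rw [Nat.mod_eq_of_lt hn]
    · rw [Nat.mod_self, p.getVert_zero, ← hlen, p.getVert_length]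
  refine ⟨fun i => p.getVert (i % L), fun i => by simp, ⟨fun i _ => (p.getVert _).2, ?_, ?_⟩,
    fun i => ?_⟩
  · intro i hi j hj hij
    simp only [mem_Iio] at hi hj
    simp only [Nat.mod_eq_of_lt hi, Nat.mod_eq_of_lt hj] at hij
    exact hp.isCycle.getVert_injOn' (by simp; omega) (by simp; omega) (Subtype.ext hij)
  · intro x hx
    obtain ⟨n, hn, hnL⟩ :=
      SimpleGraph.Walk.mem_support_iff_exists_getVert.mp (hp.mem_support ⟨x, hx⟩)
    exact ⟨n % L, Nat.mod_lt _ hL, by simp [hmod n (hlen ▸ hnL), hn]⟩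
  · have := p.adj_getVert_succ (show i % L < p.length by rw [hlen]; exact Nat.mod_lt _ hL)
    rwa [← hmod (i % L + 1) (Nat.mod_lt _ hL), Nat.mod_add_mod] at this

lemma Function.Periodic.bijOn_Iio_comp_add {c : ℕ → V} {M : ℕ} {S : Set V} (hc : Periodic c M)
    (hS : BijOn c (Iio M) S) (k : ℕ) : BijOn (fun j => c (k + j)) (Iio M) S := by
  have hmod := hc.map_mod_nat
  refine ⟨fun j hj => ?_, fun i hi j hj hij => ?_, fun x hx => ?_⟩
  · dsimp only
    rw [← hmod]
    exact hS.mapsTo (Nat.mod_lt _ (by simp at hj; omega))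
  · simp only [mem_Iio] at hi hj
    dsimp only at hij
    rw [← hmod, ← hmod (k + j)] at hij
    have := hS.injOn (Nat.mod_lt _ (by omega)) (Nat.mod_lt _ (by omega)) hij
    exact Nat.ModEq.eq_of_lt_of_lt (Nat.ModEq.add_left_cancel' k this) hi hj
  · obtain ⟨i, hi, rfl⟩ := hS.surjOn hx
    simp only [mem_Iio] at hi
    refine ⟨(i + M * k - k) % M, Nat.mod_lt _ (by omega), ?_⟩
    dsimp only
    have hkM : k ≤ M * k := Nat.le_mul_of_pos_left k (by omega)
    rw [← hmod, Nat.add_mod_mod, show k + (i + M * k - k) = i + M * k by omega,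
      Nat.add_mul_mod_self_left, Nat.mod_eq_of_lt hi]

lemma exists_path_of_cycle_sdiff_singleton {H : SimpleGraph V} {T : Set V} {M : ℕ} {c : ℕ → V}
    (hc : Periodic c (M + 1)) (hT : BijOn c (Iio (M + 1)) T)
    (hadj : ∀ i, H.Adj (c i) (c (i + 1))) {v : V} (hv : v ∈ T) :
    ∃ q : ℕ → V, BijOn q (Iio M) (T \ {v}) ∧ ∀ i, H.Adj (q i) (q (i + 1)) := by
  obtain ⟨i₀, -, rfl⟩ := hT.surjOn hv
  have hq := (hc.bijOn_Iio_comp_add hT (i₀ + 1)).sdiff_singleton (a := M) (by simp)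
  have hIio : Iio (M + 1) \ {M} = Iio M := by ext; simp; omega
  have hlast : c (i₀ + 1 + M) = c i₀ := by rw [add_assoc, add_comm 1 M, hc]
  rw [hIio, hlast] at hq
  exact ⟨_, hq, fun i => by simpa only [add_assoc] using hadj (i₀ + 1 + i)⟩

lemma exists_path_of_cycle_avoiding {H : SimpleGraph V} {S : Set V} {M : ℕ} {c : ℕ → V}
    (hc : Periodic c M) (hM : 3 ≤ M) (hS : BijOn c (Iio M) S)
    (hadj : ∀ i, H.Adj (c i) (c (i + 1))) (e : Sym2 V) :
    ∃ q : ℕ → V, BijOn q (Iio M) S ∧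
      ∀ i, i + 1 < M → H.Adj (q i) (q (i + 1)) ∧ s(q i, q (i + 1)) ≠ e := by
  by_cases he : ∃ i₀, s(c i₀, c (i₀ + 1)) = e
  · obtain ⟨i₀, rfl⟩ := he
    set q : ℕ → V := fun j => c (i₀ + 1 + j)
    have hq : BijOn q (Iio M) S := hc.bijOn_Iio_comp_add hS (i₀ + 1)
    have hfirst : c (i₀ + 1) = q 0 := rfl
    have hlast : c i₀ = q (M - 1) := by
      simp only [q]; rw [add_assoc, show 1 + (M - 1) = M by omega, hc]
    refine ⟨q, hq, fun i hi =>
      ⟨by simpa only [q, add_assoc] using hadj (i₀ + 1 + i), fun h => ?_⟩⟩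
    have hinj : ∀ {j k}, j < M → k < M → q j = q k → j = k :=
      fun hj hk h => hq.injOn (mem_Iio.mpr hj) (mem_Iio.mpr hk) h
    rw [hfirst, hlast] at h
    rcases Sym2.eq_iff.mp h with ⟨h₁, h₂⟩ | ⟨h₁, h₂⟩
    · have := hinj (by omega) (by omega) h₁; omega
    · have := hinj (by omega) (by omega) h₁
      have := hinj (by omega) (by omega) h₂
      omega
  · push Not at he
    exact ⟨c, hS, fun i _ => ⟨hadj i, he i⟩⟩

end Cycles

def delFaultEmptyIso {V : Type*} (G : SimpleGraph V) (Fe : Finset (Sym2 V)) :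
    delFault G ∅ Fe ≃g G.deleteEdges ↑Fe :=
  { Equiv.subtypeUnivEquiv fun v => Finset.notMem_empty v with map_rel_iff' := Iff.rfl }

section Faults

variable {V : Type*} {G : SimpleGraph V}

lemma delFault_anti {Fv : Finset V} {Fe Fe' : Finset (Sym2 V)} (h : Fe ⊆ Fe') :
    delFault G Fv Fe' ≤ delFault G Fv Fe :=
  fun _ _ hab => SimpleGraph.deleteEdges_anti (Finset.coe_subset.mpr h) hab

variable [Fintype V]

lemma natCard_setOf_notMem (Fv : Finset V) :
    Nat.card {v : V | v ∉ Fv} = Fintype.card V - Fv.card := by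
  rw [Nat.card_coe_set_eq, show {v : V | v ∉ Fv} = (↑Fv)ᶜ from rfl, Set.ncard_compl,
    Set.ncard_coe_finset, Nat.card_eq_fintype_card]

lemma exists_path_delFault {k : ℕ} (hham : FaultHam G k) {Fv : Finset V}
    {Fe : Finset (Sym2 V)} (hFe : ↑Fe ⊆ G.edgeSet) (hcard : Fv.card + Fe.card = k + 1)
    (hM : 3 ≤ Fintype.card V - Fv.card) :
    ∃ q : ℕ → V, BijOn q (Iio (Fintype.card V - Fv.card)) {v | v ∉ Fv} ∧
      ∀ i, i + 1 < Fintype.card V - Fv.card → (G.deleteEdges ↑Fe).Adj (q i) (q (i + 1)) := by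
  have hFv : Fv.card ≤ Fintype.card V := Fv.card_le_univ
  rcases Fe.eq_empty_or_nonempty with rfl | ⟨e, he⟩
  · obtain ⟨v, hv⟩ : Fv.Nonempty := Finset.card_pos.mp (by simp at hcard; omega)
    have hcard' : Nat.card {x : V | x ∉ Fv.erase v} = (Fintype.card V - Fv.card) + 1 := by
      rw [natCard_setOf_notMem, Finset.card_erase_of_mem hv]
      have := Finset.card_pos.mpr ⟨v, hv⟩
      omega
    obtain ⟨c, hc, hbij, hadj⟩ := exists_cycle_of_isHamiltonian_induce (by omega)
      (hham (Fv.erase v) ∅ (by simp) (by simp [Finset.card_erase_of_mem hv]; omega))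
    rw [hcard'] at hc hbij
    obtain ⟨q, hq, hqadj⟩ :=
      exists_path_of_cycle_sdiff_singleton hc hbij hadj (v := v) (by simp)
    have hS : {x : V | x ∉ Fv.erase v} \ {v} = {x | x ∉ Fv} := by
      ext x; by_cases hx : x = v <;> simp [hx, hv]
    exact ⟨q, hS ▸ hq, fun i _ => hqadj i⟩
  · have hFe₁ := Finset.card_pos.mpr ⟨e, he⟩
    have hFe' : ↑(Fe.erase e) ⊆ G.edgeSet :=
      (Finset.coe_subset.mpr (Fe.erase_subset e)).trans hFe
    obtain ⟨c, hc, hbij, hadj⟩ :=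
      exists_cycle_of_isHamiltonian_induce (by rw [natCard_setOf_notMem]; omega)
        (hham Fv (Fe.erase e) hFe' (by rw [Finset.card_erase_of_mem he]; omega))
    rw [natCard_setOf_notMem] at hc hbij
    obtain ⟨q, hq, hqadj⟩ := exists_path_of_cycle_avoiding hc hM hbij hadj e
    refine ⟨q, hq, fun i hi => ?_⟩
    obtain ⟨hadj', hne⟩ := hqadj i hi
    rw [SimpleGraph.deleteEdges_adj] at hadj' ⊢
    exact ⟨hadj'.1, fun h => hadj'.2 (Finset.mem_erase.mpr ⟨hne, h⟩)⟩

theorem hasFPM_delFault_of_card_eq [Nonempty V] (hδ : 2 ≤ G.minDegree)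
    (hham : FaultHam G (G.minDegree - 2))
    (hα : (indepNum G : ℤ) ≤ ((Fintype.card V : ℤ) + 2) / 2 - G.minDegree)
    {Fv : Finset V} {Fe : Finset (Sym2 V)} (hFe : ↑Fe ⊆ G.edgeSet)
    (hcard : Fv.card + Fe.card = G.minDegree - 1) : HasFPM (delFault G Fv Fe) := by
  have hα₁ : 1 ≤ indepNum G := one_le_indepNum
  have hFv : Fv.card ≤ Fintype.card V := Fv.card_le_univ
  obtain ⟨q, hq, hpath⟩ := exists_path_delFault (Fv := Fv) hham hFe (by omega) (by omega)
  refine hasFPM_induce_of_path _ hq hpath ?_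
  by_cases hM : Even (Fintype.card V - Fv.card)
  · exact Or.inl hM
  · rw [Nat.not_even_iff] at hM
    exact Or.inr (exists_even_chord hq.injOn (by omega))

lemma hasFPM_delFault_of_card_le {k : ℕ} (hk : k ≤ G.edgeFinset.card)
    (h : ∀ (Fv : Finset V) (Fe : Finset (Sym2 V)), ↑Fe ⊆ G.edgeSet →
      Fv.card + Fe.card = k → HasFPM (delFault G Fv Fe))
    {Fv : Finset V} {Fe : Finset (Sym2 V)} (hFe : ↑Fe ⊆ G.edgeSet)
    (hcard : Fv.card + Fe.card ≤ k) :
    HasFPM (delFault G Fv Fe) := by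
  obtain ⟨Fe', hsub, hsub', hcard'⟩ := Finset.exists_subsuperset_card_eq (n := k - Fv.card)
    (fun e he => G.mem_edgeFinset.mpr (hFe he)) (by omega) (by omega)
  exact (h Fv Fe' (fun e he => G.mem_edgeFinset.mp (hsub' he)) (by omega)).mono
    (delFault_anti hsub)

lemma not_hasFPM_deleteEdges_incidenceFinset (v : V) :
    ¬ HasFPM (G.deleteEdges ↑(G.incidenceFinset v)) := by
  refine not_hasFPM_of_isolated (v := v) fun w hadj => ?_
  obtain ⟨hvw, hnot⟩ := SimpleGraph.deleteEdges_adj.mp hadj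
  exact hnot ((G.mem_incidenceFinset v _).mpr ⟨hvw, Sym2.mem_mk_left v w⟩)

lemma minDegree_sub_one_le_card_edgeFinset [Nonempty V] :
    G.minDegree - 1 ≤ G.edgeFinset.card := by
  obtain ⟨v, hv⟩ := G.exists_minimal_degree_vertex
  exact hv ▸ (Nat.sub_le _ _).trans (G.degree_le_card_edgeFinset v)

lemma fsmp_eq_minDegree [Nonempty V]
    (h : ∀ (Fv : Finset V) (Fe : Finset (Sym2 V)), ↑Fe ⊆ G.edgeSet →
      Fv.card + Fe.card = G.minDegree - 1 → HasFPM (delFault G Fv Fe)) :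
    fsmp G = G.minDegree := by
  obtain ⟨v, hv⟩ := G.exists_minimal_degree_vertex
  refine IsLeast.csInf_eq ⟨⟨∅, G.incidenceFinset v, ?_, ?_, fun hfpm => ?_⟩, ?_⟩
  · rw [SimpleGraph.coe_incidenceFinset]; exact G.incidenceSet_subset v
  · simp [G.card_incidenceFinset_eq_degree, hv]
  · exact not_hasFPM_deleteEdges_incidenceFinset v (hfpm.of_iso (delFaultEmptyIso G _))
  · rintro n ⟨Fv, Fe, hFe, rfl, hno⟩
    by_contra! hlt
    exact hno (hasFPM_delFault_of_card_le minDegree_sub_one_le_card_edgeFinset h hFe (by omega))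

lemma fmp_eq_minDegree [Nonempty V]
    (h : ∀ (Fv : Finset V) (Fe : Finset (Sym2 V)), ↑Fe ⊆ G.edgeSet →
      Fv.card + Fe.card = G.minDegree - 1 → HasFPM (delFault G Fv Fe)) :
    fmp G = G.minDegree := by
  obtain ⟨v, hv⟩ := G.exists_minimal_degree_vertex
  refine IsLeast.csInf_eq
    ⟨⟨G.incidenceFinset v, ?_, ?_, not_hasFPM_deleteEdges_incidenceFinset v⟩, ?_⟩
  · rw [SimpleGraph.coe_incidenceFinset]; exact G.incidenceSet_subset v
  · rw [G.card_incidenceFinset_eq_degree, hv]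
  · rintro n ⟨Fe, hFe, rfl, hno⟩
    by_contra! hlt
    exact hno ((hasFPM_delFault_of_card_le minDegree_sub_one_le_card_edgeFinset h hFe
      (by simp; omega)).of_iso (delFaultEmptyIso G Fe))

end Faults

/-- If `G` is a `(δ−2)`-fault Hamiltonian graph with minimum degree `δ ≥ 3` and
`α(G) ≤ ⌈(|G|+1)/2⌉ − δ`, then deleting any `δ−1` vertices and/or edges leaves a graph
with a fractional perfect matching; consequently `fsmp(G) = fmp(G) = δ`. -/
theorem fsmp_eq_fmp_eq_minDegree {V : Type*} [Fintype V] [Nonempty V] (G : SimpleGraph V)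
    (hδ : 3 ≤ G.minDegree) (hham : FaultHam G (G.minDegree - 2))
    (hα : (indepNum G : ℤ) ≤ ((Fintype.card V : ℤ) + 2) / 2 - G.minDegree) :
    (∀ (Fv : Finset V) (Fe : Finset (Sym2 V)), ↑Fe ⊆ G.edgeSet →
        Fv.card + Fe.card = G.minDegree - 1 → HasFPM (delFault G Fv Fe)) ∧
      fsmp G = G.minDegree ∧ fmp G = G.minDegree := by
  have hfault : ∀ (Fv : Finset V) (Fe : Finset (Sym2 V)), ↑Fe ⊆ G.edgeSet →
      Fv.card + Fe.card = G.minDegree - 1 → HasFPM (delFault G Fv Fe) :=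
    fun _ _ hFe hcard => hasFPM_delFault_of_card_eq (by omega) hham hα hFe hcard
  exact ⟨hfault, fsmp_eq_minDegree hfault, fmp_eq_minDegree hfault⟩
end

section
/- The independence number of the 2-dimensional recursive circulant graph G(d², d) equals (d² − d)/2 for every integer d ≥ 3. -/
open scoped Classical

/-- The recursive circulant graph `G(d², d)`: vertices are `ℤ/(d²)`, with `u ~ v` iff
`u − v ≡ ±1` or `±d (mod d²)`. -/
def recCirculant (d : ℕ) : SimpleGraph (ZMod (d ^ 2)) :=
  SimpleGraph.fromRel fun u v => u - v = 1 ∨ u - v = (d : ZMod (d ^ 2))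

namespace RecCirculantProof

open Finset

section win
variable {N : ℕ} [NeZero N]

/-- Any "window" `{x, x+step, …, x+(L-1)·step}` meets an independent-like set in at most
`L/2` points, because the trace and its shift by one are disjoint subsets of `range L`. -/
lemma window_card_le (S : Finset (ZMod N)) (step : ZMod N) (L : ℕ) (hL : 0 < L)
    (h1 : ∀ a ∈ S, a + step ∉ S)
    (h2 : ∀ a ∈ S, a + step * ((L - 1 : ℕ) : ZMod N) ∉ S)
    (x : ZMod N) :
    ((range L).filter (fun t : ℕ => x + step * (t : ZMod N) ∈ S)).card ≤ L / 2 := by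
  set T : Finset ℕ := (range L).filter (fun t : ℕ => x + step * (t : ZMod N) ∈ S) with hT
  have hTsub : T ⊆ range L := filter_subset _ _
  set T' : Finset ℕ := T.image (fun t => (t + 1) % L) with hT'
  have hT'sub : T' ⊆ range L := by
    intro u hu
    simp only [hT', mem_image] at hu
    obtain ⟨t, _, rfl⟩ := hu
    exact mem_range.mpr (Nat.mod_lt _ hL)
  have hinj : Set.InjOn (fun t => (t + 1) % L) T := by
    intro t1 h1' t2 h2' h
    have b1 := mem_range.mp (hTsub h1')
    have b2 := mem_range.mp (hTsub h2')
    simp only at h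
    rcases lt_or_ge (t1 + 1) L with c1 | c1 <;> rcases lt_or_ge (t2 + 1) L with c2 | c2
    · rwa [Nat.mod_eq_of_lt c1, Nat.mod_eq_of_lt c2, Nat.add_right_cancel_iff] at h
    · have e2 : t2 + 1 = L := by omega
      rw [Nat.mod_eq_of_lt c1, e2, Nat.mod_self] at h; omega
    · have e1 : t1 + 1 = L := by omega
      rw [e1, Nat.mod_self, Nat.mod_eq_of_lt c2] at h; omega
    · omega
  have hcard' : T'.card = T.card := card_image_of_injOn hinj
  have hdisj : Disjoint T T' := by
    rw [disjoint_right]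
    intro u huT' huT
    simp only [hT', mem_image] at huT'
    obtain ⟨t, htT, hu⟩ := huT'
    have hmemt : x + step * (t : ZMod N) ∈ S := (mem_filter.mp htT).2
    have btL := mem_range.mp (hTsub htT)
    rcases lt_or_ge (t + 1) L with c | c
    · rw [Nat.mod_eq_of_lt c] at hu
      subst hu
      have hmemu : x + step * ((t + 1 : ℕ) : ZMod N) ∈ S := (mem_filter.mp huT).2
      have heq : x + step * ((t + 1 : ℕ) : ZMod N) = (x + step * (t : ZMod N)) + step := by
        push_cast; ring
      rw [heq] at hmemu
      exact h1 _ hmemt hmemu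
    · have e' : t + 1 = L := by omega
      have hu0 : u = 0 := by rw [← hu, e', Nat.mod_self]
      subst hu0
      have hmemx : x ∈ S := by
        have := (mem_filter.mp huT).2
        simpa using this
      have e : t = L - 1 := by omega
      subst e
      exact h2 x hmemx hmemt
  have hun := card_le_card (union_subset hTsub hT'sub)
  rw [card_union_of_disjoint hdisj, hcard', card_range] at hun
  omega

/-- Double counting: summed over all `x`, the windows cover each element of `S`
exactly `L` times. -/
lemma window_sum (S : Finset (ZMod N)) (step : ZMod N) (L : ℕ) :
    ∑ x : ZMod N, ((range L).filter (fun t : ℕ => x + step * (t : ZMod N) ∈ S)).card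
      = L * S.card := by
  have key : ∀ c : ZMod N,
      (univ.filter (fun x : ZMod N => x + c ∈ S)) = S.image (fun y => y - c) := by
    intro c
    ext y
    simp only [mem_filter, mem_univ, true_and, mem_image]
    constructor
    · intro h; exact ⟨y + c, h, by ring⟩
    · rintro ⟨z, hz, rfl⟩; simpa using hz
  calc ∑ x : ZMod N, ((range L).filter (fun t : ℕ => x + step * (t : ZMod N) ∈ S)).card
      = ∑ x : ZMod N, ∑ t ∈ range L, if x + step * (t : ZMod N) ∈ S then 1 else 0 := by
        refine Finset.sum_congr rfl fun x _ => ?_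
        rw [card_filter]
    _ = ∑ t ∈ range L, ∑ x : ZMod N, if x + step * (t : ZMod N) ∈ S then 1 else 0 :=
        Finset.sum_comm
    _ = ∑ t ∈ range L, S.card := by
        refine Finset.sum_congr rfl fun t _ => ?_
        rw [← card_filter, key, card_image_of_injective _ sub_left_injective]
    _ = L * S.card := by rw [Finset.sum_const, card_range, smul_eq_mul]

lemma global_bound (S : Finset (ZMod N)) (step : ZMod N) (L : ℕ) (hL : 0 < L)
    (h1 : ∀ a ∈ S, a + step ∉ S)
    (h2 : ∀ a ∈ S, a + step * ((L - 1 : ℕ) : ZMod N) ∉ S) :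
    L * S.card ≤ N * (L / 2) := by
  calc L * S.card
      = ∑ x : ZMod N, ((range L).filter (fun t : ℕ => x + step * (t : ZMod N) ∈ S)).card :=
        (window_sum S step L).symm
    _ ≤ ∑ _x : ZMod N, (L / 2) :=
        Finset.sum_le_sum fun x _ => window_card_le S step L hL h1 h2 x
    _ = N * (L / 2) := by rw [Finset.sum_const, card_univ, ZMod.card, smul_eq_mul]

end win

/-- Upper bound: any independent set of `G(d²,d)` has at most `(d²-d)/2` elements. -/
lemma upper (d : ℕ) (hd : 3 ≤ d) (s : Finset (ZMod (d^2)))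
    (hs : ∀ a ∈ s, ∀ b ∈ s, ¬ (recCirculant d).Adj a b) :
    s.card ≤ (d^2 - d)/2 := by
  haveI : NeZero (d^2) := ⟨by positivity⟩
  haveI : Fact (1 < d^2) := ⟨by nlinarith⟩
  have h10 : (1 : ZMod (d^2)) ≠ 0 := one_ne_zero
  have hd0 : ((d : ℕ) : ZMod (d^2)) ≠ 0 := by
    rw [Ne, ZMod.natCast_eq_zero_iff]
    intro hdvd
    have := Nat.le_of_dvd (by omega) hdvd
    nlinarith
  have hkey : ∀ a ∈ s, ∀ b ∈ s, a - b ≠ 1 ∧ a - b ≠ (d : ZMod (d^2)) := by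
    intro a ha b hb
    constructor <;> intro h <;> refine hs a ha b hb ?_
    · have hne : a ≠ b := fun he => by rw [he, sub_self] at h; exact h10 h.symm
      simpa only [recCirculant, SimpleGraph.fromRel_adj] using ⟨hne, Or.inl (Or.inl h)⟩
    · have hne : a ≠ b := fun he => by rw [he, sub_self] at h; exact hd0 h.symm
      simpa only [recCirculant, SimpleGraph.fromRel_adj] using ⟨hne, Or.inl (Or.inr h)⟩
  rcases Nat.even_or_odd d with ⟨m, hm⟩ | ⟨m, hm⟩
  · -- d even, d = 2m: average over windows {x, x+1, …, x+d}, odd cycles of length d+1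
    have hm' : d = 2 * m := by omega
    have hmge : 2 ≤ m := by omega
    have h1 : ∀ a ∈ s, a + (1 : ZMod (d^2)) ∉ s := fun a ha hmem =>
      (hkey _ hmem _ ha).1 (by ring)
    have h2 : ∀ a ∈ s, a + (1 : ZMod (d^2)) * ((d + 1 - 1 : ℕ) : ZMod (d^2)) ∉ s := by
      intro a ha hmem
      rw [show (d + 1 - 1 : ℕ) = d from by omega, one_mul] at hmem
      exact (hkey _ hmem _ ha).2 (by ring)
    have hb := global_bound s 1 (d+1) (by omega) h1 h2
    obtain ⟨M, hM⟩ : ∃ M, M = m * m := ⟨_, rfl⟩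
    have hsq : d^2 = 4 * M := by rw [hm', hM]; ring
    have e1 : (d+1)/2 = m := by omega
    rw [e1] at hb
    have e2 : d ^ 2 * m = 4 * (m * M) := by rw [hsq]; ring
    rw [e2] at hb
    have hmM : m ≤ M := by nlinarith
    have e3 : (d^2 - d)/2 = 2*M - m := by omega
    rw [e3]
    by_contra hc
    push_neg at hc
    have hge : 2*M + 1 ≤ s.card + m := by omega
    have hmul := Nat.mul_le_mul_left (d+1) hge
    have hb2 : (2*m+1) * s.card ≤ 4 * (m * M) := by
      rw [show 2*m+1 = d+1 from by omega]; exact hb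
    have hmul2 : (2*m+1) * (2*M+1) ≤ (2*m+1) * (s.card + m) := by
      rw [show 2*m+1 = d+1 from by omega]; exact hmul
    nlinarith [hb2, hmul2, hM, hmge]
  · -- d odd, d = 2m+1: average over windows {x, x+d, …, x+(d-1)d}, odd cycles of length d
    have hmge : 1 ≤ m := by omega
    have h1 : ∀ a ∈ s, a + ((d : ℕ) : ZMod (d^2)) ∉ s := fun a ha hmem =>
      (hkey _ hmem _ ha).2 (by ring)
    have hzero : ((d : ℕ) : ZMod (d^2)) * ((d - 1 : ℕ) : ZMod (d^2))
        + ((d : ℕ) : ZMod (d^2)) = 0 := by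
      have hcast : ((d : ℕ) : ZMod (d^2)) * ((d - 1 : ℕ) : ZMod (d^2)) + ((d:ℕ) : ZMod (d^2))
          = ((d * (d-1) + d : ℕ) : ZMod (d^2)) := by
        push_cast [Nat.cast_sub (by omega : 1 ≤ d)]; ring
      have hnat : d * (d-1) + d = d^2 := by
        calc d * (d-1) + d = d * ((d-1) + 1) := by ring
          _ = d * d := by rw [show d - 1 + 1 = d from by omega]
          _ = d^2 := (sq d).symm
      rw [hcast, hnat]
      exact ZMod.natCast_self _
    have h2 : ∀ a ∈ s, a + ((d : ℕ) : ZMod (d^2)) * ((d - 1 : ℕ) : ZMod (d^2)) ∉ s := by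
      intro a ha hmem
      refine (hkey a ha _ hmem).2 ?_
      have heq : a - (a + ((d : ℕ) : ZMod (d^2)) * ((d - 1 : ℕ) : ZMod (d^2)))
          = -(((d : ℕ) : ZMod (d^2)) * ((d - 1 : ℕ) : ZMod (d^2))) := by ring
      rw [heq]
      linear_combination -hzero
    have hb := global_bound s ((d : ℕ) : ZMod (d^2)) d (by omega) h1 h2
    have e1 : d/2 = m := by omega
    rw [e1] at hb
    obtain ⟨P, hP⟩ : ∃ P, P = d * m := ⟨_, rfl⟩
    have e2 : d ^ 2 * m = d * P := by rw [hP]; ring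
    rw [e2] at hb
    have hcard : s.card ≤ P := Nat.le_of_mul_le_mul_left hb (by omega)
    have hdP : d^2 = 2*P + d := by rw [hP, hm]; ring
    omega

lemma cast_sub_eq {N : ℕ} (A B C : ℕ) (h : ((A : ZMod N)) - B = (C : ZMod N)) :
    A ≡ B + C [MOD N] := by
  have h2 : ((A : ℕ) : ZMod N) = ((B + C : ℕ) : ZMod N) := by push_cast; linear_combination h
  exact (ZMod.natCast_eq_natCast_iff _ _ _).mp h2

/-- Lower bound, odd case: the even numbers `0, 2, …, d²-d-2` form an independent set. -/
lemma lower_odd (d m : ℕ) (hm : d = 2*m+1) (hd : 3 ≤ d) :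
    ∃ s : Finset (ZMod (d^2)), s.card = (d^2-d)/2 ∧
      ∀ a ∈ s, ∀ b ∈ s, ¬ (recCirculant d).Adj a b := by
  haveI : NeZero (d^2) := ⟨by positivity⟩
  obtain ⟨K, hK⟩ : ∃ K, K = d*m := ⟨_, rfl⟩
  have hsq : d^2 = 2*K + d := by rw [hK, hm]; ring
  have castinj : ∀ A B : ℕ, A < d^2 → B < d^2 →
      ((A : ZMod (d^2)) = (B : ZMod (d^2))) → A = B := by
    intro A B hA hB h
    rw [← ZMod.val_cast_of_lt hA, ← ZMod.val_cast_of_lt hB, h]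
  refine ⟨(range K).image (fun k => ((2*k : ℕ) : ZMod (d^2))), ?_, ?_⟩
  · rw [card_image_of_injOn, card_range]
    · omega
    · intro k1 hk1 k2 hk2 h
      simp only [mem_coe, mem_range] at hk1 hk2
      have := castinj (2*k1) (2*k2) (by omega) (by omega) h
      omega
  · have main : ∀ k1 < K, ∀ k2 < K, ∀ C : ℕ, (C = 1 ∨ C = d) →
        ¬ (((2*k1 : ℕ) : ZMod (d^2)) - ((2*k2 : ℕ) : ZMod (d^2)) = ((C : ℕ) : ZMod (d^2))) := by
      intro k1 hk1 k2 hk2 C hC h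
      have hmod := cast_sub_eq (2*k1) (2*k2) C h
      have hlt1 : 2*k1 < d^2 := by omega
      have hlt2 : 2*k2 + C < d^2 := by omega
      rw [Nat.ModEq, Nat.mod_eq_of_lt hlt1, Nat.mod_eq_of_lt hlt2] at hmod
      omega
    rintro a ha b hb hadj
    simp only [mem_image, mem_range] at ha hb
    obtain ⟨k1, hk1, rfl⟩ := ha
    obtain ⟨k2, hk2, rfl⟩ := hb
    simp only [recCirculant, SimpleGraph.fromRel_adj] at hadj
    obtain ⟨hne, (h | h) | (h | h)⟩ := hadj
    · exact main k1 hk1 k2 hk2 1 (Or.inl rfl) (by rw [Nat.cast_one]; exact h)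
    · exact main k1 hk1 k2 hk2 d (Or.inr rfl) h
    · exact main k2 hk2 k1 hk1 1 (Or.inl rfl) (by rw [Nat.cast_one]; exact h)
    · exact main k2 hk2 k1 hk1 d (Or.inr rfl) h

/-- Lower bound, even case: a suitable union of translates of a pattern of period `2d`. -/
lemma lower_even (d m : ℕ) (hm : d = 2*m) (hd : 3 ≤ d) :
    ∃ s : Finset (ZMod (d^2)), s.card = (d^2-d)/2 ∧
      ∀ a ∈ s, ∀ b ∈ s, ¬ (recCirculant d).Adj a b := by
  haveI : NeZero (d^2) := ⟨by positivity⟩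
  have hmge : 2 ≤ m := by omega
  set tval : ℕ → ℕ := fun j => if j % 2 = 0 then j else d + j with htval
  have htform : ∀ j < d - 1, (j % 2 = 0 ∧ tval j = j) ∨ (j % 2 = 1 ∧ tval j = d + j) := by
    intro j _
    rcases Nat.even_or_odd j with hj | hj
    · left; refine ⟨Nat.even_iff.mp hj, ?_⟩; simp [htval, Nat.even_iff.mp hj]
    · right; refine ⟨Nat.odd_iff.mp hj, ?_⟩; simp [htval, Nat.odd_iff.mp hj]
  have hdvd : (d*2) ∣ d^2 := ⟨m, by rw [hm]; ring⟩
  have hDM : d^2 = d*m*2 := by rw [hm]; ring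
  have keybound : ∀ q < m, d*q + d ≤ d*m := by
    intro q hq
    have h := Nat.mul_le_mul_left d (Nat.succ_le_of_lt hq)
    rw [Nat.mul_succ] at h
    exact h
  have hvlt : ∀ q < m, ∀ j < d - 1, d*q*2 + tval j < d^2 := by
    intro q hq j hj
    have h1 := keybound q hq
    have h2 := htform j hj
    omega
  have castinj : ∀ A B : ℕ, A < d^2 → B < d^2 →
      ((A : ZMod (d^2)) = (B : ZMod (d^2))) → A = B := by
    intro A B hA hB h
    rw [← ZMod.val_cast_of_lt hA, ← ZMod.val_cast_of_lt hB, h]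
  have hmodval : ∀ q t : ℕ, (d*q*2 + t) % (d*2) = t % (d*2) := by
    intro q t
    have e : d*q*2 + t = t + (d*2)*q := by ring
    rw [e, Nat.add_mul_mod_self_left]
  refine ⟨((range m) ×ˢ (range (d-1))).image
      (fun p => ((d*p.1*2 + tval p.2 : ℕ) : ZMod (d^2))), ?_, ?_⟩
  · rw [card_image_of_injOn, card_product, card_range, card_range]
    · have h6 : d - 1 + 1 = d := by omega
      have h5 : m*(d-1)*2 + d = d^2 := by
        calc m*(d-1)*2 + d = (d-1)*(2*m) + d := by ring
          _ = (d-1)*d + d := by rw [← hm]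
          _ = ((d-1)+1)*d := by ring
          _ = d*d := by rw [h6]
          _ = d^2 := (sq d).symm
      omega
    · rintro ⟨q1, j1⟩ hp1 ⟨q2, j2⟩ hp2 h
      simp only [mem_coe, mem_product, mem_range] at hp1 hp2
      obtain ⟨hq1, hj1⟩ := hp1
      obtain ⟨hq2, hj2⟩ := hp2
      have heq := castinj _ _ (hvlt q1 hq1 j1 hj1) (hvlt q2 hq2 j2 hj2) h
      have hmodeq : tval j1 % (d*2) = tval j2 % (d*2) := by
        rw [← hmodval q1 (tval j1), ← hmodval q2 (tval j2), heq]
      have hf1 := htform j1 hj1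
      have hf2 := htform j2 hj2
      have ht1lt : tval j1 < d*2 := by omega
      have ht2lt : tval j2 < d*2 := by omega
      rw [Nat.mod_eq_of_lt ht1lt, Nat.mod_eq_of_lt ht2lt] at hmodeq
      have hq : q1 = q2 := by
        have e : d*q1*2 = d*q2*2 := by omega
        have e2 : (d*2)*q1 = (d*2)*q2 := by
          calc (d*2)*q1 = d*q1*2 := by ring
            _ = d*q2*2 := e
            _ = (d*2)*q2 := by ring
        exact Nat.eq_of_mul_eq_mul_left (by omega) e2
      have hj : j1 = j2 := by omega
      rw [hq, hj]
  · have main : ∀ q1 < m, ∀ j1 < d-1, ∀ q2 < m, ∀ j2 < d-1, ∀ C : ℕ, (C = 1 ∨ C = d) →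
        ¬ (((d*q1*2 + tval j1 : ℕ) : ZMod (d^2)) - ((d*q2*2 + tval j2 : ℕ) : ZMod (d^2))
            = ((C : ℕ) : ZMod (d^2))) := by
      intro q1 hq1 j1 hj1 q2 hq2 j2 hj2 C hC h
      have hmod := cast_sub_eq _ _ _ h
      have hmod2 := Nat.ModEq.of_dvd hdvd hmod
      have hf1 := htform j1 hj1
      have hf2 := htform j2 hj2
      have ht1lt : tval j1 < d*2 := by omega
      rw [Nat.ModEq] at hmod2
      rw [hmodval q1 (tval j1)] at hmod2
      have hrhs : (d*q2*2 + tval j2 + C) % (d*2) = (tval j2 + C) % (d*2) := by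
        have e : d*q2*2 + tval j2 + C = (tval j2 + C) + (d*2)*q2 := by ring
        rw [e, Nat.add_mul_mod_self_left]
      rw [hrhs, Nat.mod_eq_of_lt ht1lt] at hmod2
      rcases lt_or_ge (tval j2 + C) (d*2) with hcase | hcase
      · rw [Nat.mod_eq_of_lt hcase] at hmod2
        omega
      · rw [Nat.mod_eq_sub_mod hcase, Nat.mod_eq_of_lt (by omega)] at hmod2
        omega
    rintro a ha b hb hadj
    simp only [mem_image, mem_product, mem_range] at ha hb
    obtain ⟨⟨q1, j1⟩, ⟨hq1, hj1⟩, rfl⟩ := ha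
    obtain ⟨⟨q2, j2⟩, ⟨hq2, hj2⟩, rfl⟩ := hb
    simp only [recCirculant, SimpleGraph.fromRel_adj] at hadj
    obtain ⟨hne, (h | h) | (h | h)⟩ := hadj
    · exact main q1 hq1 j1 hj1 q2 hq2 j2 hj2 1 (Or.inl rfl) (by rw [Nat.cast_one]; exact h)
    · exact main q1 hq1 j1 hj1 q2 hq2 j2 hj2 d (Or.inr rfl) h
    · exact main q2 hq2 j2 hj2 q1 hq1 j1 hj1 1 (Or.inl rfl) (by rw [Nat.cast_one]; exact h)
    · exact main q2 hq2 j2 hj2 q1 hq1 j1 hj1 d (Or.inr rfl) h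

end RecCirculantProof

/-- `α(G(d², d)) = (d² − d)/2` for every `d ≥ 3`. -/
theorem indepNum_recCirculant (d : ℕ) (hd : 3 ≤ d) :
    indepNum (recCirculant d) = (d ^ 2 - d) / 2 := by
  have hub : ∀ n ∈ {n | ∃ s : Finset (ZMod (d^2)), s.card = n ∧
      ∀ a ∈ s, ∀ b ∈ s, ¬ (recCirculant d).Adj a b}, n ≤ (d^2 - d)/2 := by
    rintro n ⟨s, rfl, hs⟩
    exact RecCirculantProof.upper d hd s hs
  have hmem : (d^2 - d)/2 ∈ {n | ∃ s : Finset (ZMod (d^2)), s.card = n ∧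
      ∀ a ∈ s, ∀ b ∈ s, ¬ (recCirculant d).Adj a b} := by
    rcases Nat.even_or_odd d with ⟨m, hm⟩ | ⟨m, hm⟩
    · exact RecCirculantProof.lower_even d m (by omega) hd
    · exact RecCirculantProof.lower_odd d m (by omega) hd
  apply le_antisymm
  · exact csSup_le ⟨0, ⟨∅, by simp⟩⟩ hub
  · exact le_csSup ⟨(d^2 - d)/2, hub⟩ hmem
end
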